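/- arXiv:1505.02238 — 4 statements merged into one kernel-verified Lean document; each statement's English description precedes it below -/
import Mathlib

section
/- Let f(x,y) ∈ R[x,y;ρ,θ] be a bivariate skew polynomial all of whose coefficients lie in R^{ρ,θ}. If f(x,y) ⋆ g(x,y) = 0 for some nonzero g(x,y) ∈ R[x,y;ρ,θ], then there exists a nonzero element r ∈ R such that f(x,y) ⋆ r = 0. -/
open Finsupp

namespace SkewBivar

variable {R : Type*} [CommRing R]

/-- The ring automorphism `ρ^i θ^j` attached to the monomial exponent `(i,j)`. -/
def σ (ρ θ : RingAut R) (p : ℕ × ℕ) : RingAut R := ρ ^ p.1 * θ ^ p.2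

theorem σ_zero (ρ θ : RingAut R) : σ ρ θ 0 = 1 := by simp [σ]

theorem σ_add (ρ θ : RingAut R) (hc : Commute ρ θ) (p q : ℕ × ℕ) :
    σ ρ θ (p + q) = σ ρ θ p * σ ρ θ q := by
  simp only [σ, Prod.fst_add, Prod.snd_add, pow_add]
  conv_rhs => rw [mul_assoc, ← mul_assoc (θ ^ p.2), (hc.symm.pow_pow p.2 q.1).eq, mul_assoc]
  rw [mul_assoc]

/-- Twisted convolution on finitely supported functions `ℕ × ℕ →₀ R`. -/
noncomputable def skmul (ρ θ : RingAut R) (f g : (ℕ × ℕ) →₀ R) : (ℕ × ℕ) →₀ R :=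
  f.sum fun a r => g.sum fun b s => Finsupp.single (a + b) (r * σ ρ θ a s)

variable (ρ θ : RingAut R)

theorem zero_skmul (g : (ℕ × ℕ) →₀ R) : skmul ρ θ 0 g = 0 := by
  simp [skmul]

theorem skmul_zero (f : (ℕ × ℕ) →₀ R) : skmul ρ θ f 0 = 0 := by
  simp [skmul]

theorem add_skmul (f₁ f₂ g : (ℕ × ℕ) →₀ R) :
    skmul ρ θ (f₁ + f₂) g = skmul ρ θ f₁ g + skmul ρ θ f₂ g := by
  unfold skmul
  rw [Finsupp.sum_add_index']
  · intro a
    simp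
  · intro a r₁ r₂
    rw [← Finsupp.sum_add]
    congr 1
    ext b s
    rw [add_mul, Finsupp.single_add]

theorem skmul_add (f g₁ g₂ : (ℕ × ℕ) →₀ R) :
    skmul ρ θ f (g₁ + g₂) = skmul ρ θ f g₁ + skmul ρ θ f g₂ := by
  unfold skmul
  rw [← Finsupp.sum_add]
  congr 1
  ext a r
  rw [Finsupp.sum_add_index']
  · intro b; simp
  · intro b s₁ s₂
    rw [map_add, mul_add, Finsupp.single_add]

theorem single_skmul_single (a b : ℕ × ℕ) (r s : R) :
    skmul ρ θ (Finsupp.single a r) (Finsupp.single b s)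
      = Finsupp.single (a + b) (r * σ ρ θ a s) := by
  unfold skmul
  rw [Finsupp.sum_single_index, Finsupp.sum_single_index]
  · simp
  · rw [Finsupp.sum_single_index] <;> simp

theorem one_skmul (f : (ℕ × ℕ) →₀ R) : skmul ρ θ (Finsupp.single 0 1) f = f := by
  unfold skmul
  rw [Finsupp.sum_single_index]
  · simp only [σ_zero, zero_add, one_mul]
    exact Finsupp.sum_single f
  · simp

theorem skmul_one (f : (ℕ × ℕ) →₀ R) : skmul ρ θ f (Finsupp.single 0 1) = f := by
  unfold skmul
  conv_rhs => rw [← f.sum_single]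
  congr 1
  ext a r
  rw [Finsupp.sum_single_index] <;> simp

theorem skmul_assoc (hc : Commute ρ θ) (f g h : (ℕ × ℕ) →₀ R) :
    skmul ρ θ (skmul ρ θ f g) h = skmul ρ θ f (skmul ρ θ g h) := by
  induction f using Finsupp.induction generalizing g h with
  | zero => simp [zero_skmul]
  | single_add a r f' _ _ ihf =>
    rw [add_skmul, add_skmul, add_skmul, ihf]
    congr 1
    induction g using Finsupp.induction generalizing h with
    | zero => simp [zero_skmul, skmul_zero]
    | single_add b s g' _ _ ihg =>
      rw [skmul_add, add_skmul, add_skmul, skmul_add, ihg]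
      congr 1
      induction h using Finsupp.induction with
      | zero => simp [skmul_zero]
      | single_add c t h' _ _ ihh =>
        rw [skmul_add, skmul_add, skmul_add, ihh]
        congr 1
        rw [single_skmul_single, single_skmul_single, single_skmul_single,
          single_skmul_single, σ_add ρ θ hc, add_assoc]
        rw [map_mul, ← mul_assoc]
        rfl

/-- The bivariate skew polynomial ring `R[x,y;ρ,θ]`, realized as finitely supported
functions on exponent pairs, with the twisted convolution product. -/
def _root_.SkewPoly (R : Type*) [CommRing R] (ρ θ : RingAut R) : Type _ := (ℕ × ℕ) →₀ R

noncomputable instance : AddCommGroup (SkewPoly R ρ θ) :=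
  inferInstanceAs (AddCommGroup ((ℕ × ℕ) →₀ R))

noncomputable instance [Fact (Commute ρ θ)] : Ring (SkewPoly R ρ θ) where
  __ := (inferInstance : AddCommGroup ((ℕ × ℕ) →₀ R))
  mul f g := skmul ρ θ f g
  one := Finsupp.single 0 1
  mul_assoc f g h := skmul_assoc ρ θ Fact.out f g h
  one_mul := one_skmul ρ θ
  mul_one := skmul_one ρ θ
  left_distrib := skmul_add ρ θ
  right_distrib f g h := add_skmul ρ θ f g h
  zero_mul := zero_skmul ρ θ
  mul_zero := skmul_zero ρ θ

end SkewBivar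

namespace SkewPoly

open SkewBivar

variable {R : Type*} [CommRing R] {ρ θ : RingAut R}

/-- The monomial `a·x^i·y^j` of `R[x,y;ρ,θ]`. -/
noncomputable def monomial (ρ θ : RingAut R) (i j : ℕ) (a : R) : SkewPoly R ρ θ :=
  Finsupp.single (i, j) a

/-- The coefficient of `x^p.1·y^p.2` in a bivariate skew polynomial. -/
def coeff (f : SkewPoly R ρ θ) (p : ℕ × ℕ) : R :=
  (show (ℕ × ℕ) →₀ R from f) p

theorem mul_def [Fact (Commute ρ θ)] (f g : SkewPoly R ρ θ) :
    f * g = skmul ρ θ f g := rfl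

theorem monomial_mul_monomial [Fact (Commute ρ θ)] (i j k t : ℕ) (a b : R) :
    monomial ρ θ i j a * monomial ρ θ k t b
      = monomial ρ θ (i + k) (j + t) (a * (σ ρ θ (i, j)) b) := by
  show skmul ρ θ (Finsupp.single (i, j) a) (Finsupp.single (k, t) b) = _
  rw [single_skmul_single]
  rfl

/-- A nonzero bivariate skew polynomial has quasi-degree `(k,t)` if its `(k,t)` coefficient
is nonzero while every coefficient `(i,j)` with `(i,j) → (k,t)` (i.e. `j > t`, or `j = t` and
`i > k`) vanishes. -/
def HasQuasiDeg (f : SkewPoly R ρ θ) (k t : ℕ) : Prop :=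
  coeff f (k, t) ≠ 0 ∧ ∀ i j : ℕ, (t < j ∨ (j = t ∧ k < i)) → coeff f (i, j) = 0

/-- A bivariate skew polynomial is monic if its leading coefficient is `1`. -/
def Monic (f : SkewPoly R ρ θ) : Prop :=
  ∃ k t : ℕ, HasQuasiDeg f k t ∧ coeff f (k, t) = 1

/-- A left ideal that is in fact a two-sided ideal. -/
def IsTwoSidedIdeal [Fact (Commute ρ θ)] (I : Ideal (SkewPoly R ρ θ)) : Prop :=
  ∀ a ∈ I, ∀ b : SkewPoly R ρ θ, a * b ∈ I

end SkewPoly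



section McCoyAux

open SkewBivar

variable {R : Type*} [CommRing R]

theorem aut_apply_inv (φ : RingAut R) (x : R) : φ (φ⁻¹ x) = x := φ.apply_symm_apply x

theorem aut_inv_apply (φ : RingAut R) (x : R) : φ⁻¹ (φ x) = x := φ.symm_apply_apply x

theorem pow_fixed (φ : RingAut R) (c : R) (h : φ c = c) (n : ℕ) : (φ ^ n) c = c := by
  induction n with
  | zero => rfl
  | succ n ih => rw [pow_succ]; show (φ ^ n) (φ c) = c; rw [h, ih]

theorem sigma_fixed (ρ θ : RingAut R) (c : R) (h1 : ρ c = c) (h2 : θ c = c) (q : ℕ × ℕ) :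
    σ ρ θ q c = c := by
  show (ρ ^ q.1) ((θ ^ q.2) c) = c
  rw [pow_fixed θ c h2, pow_fixed ρ c h1]

theorem sigma_inv_fixed (ρ θ : RingAut R) (c : R) (h1 : ρ c = c) (h2 : θ c = c) (q : ℕ × ℕ) :
    (σ ρ θ q)⁻¹ c = c := by
  conv_lhs => rw [← sigma_fixed ρ θ c h1 h2 q]
  exact aut_inv_apply _ _

theorem sigma_inv_comp (ρ θ : RingAut R) (hc : Commute ρ θ) (a b : ℕ × ℕ) (x : R) :
    (σ ρ θ (a + b))⁻¹ (σ ρ θ a x) = (σ ρ θ b)⁻¹ x := by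
  have h : σ ρ θ (a + b) ((σ ρ θ b)⁻¹ x) = σ ρ θ a x := by
    rw [σ_add ρ θ hc]
    show σ ρ θ a (σ ρ θ b ((σ ρ θ b)⁻¹ x)) = σ ρ θ a x
    rw [aut_apply_inv]
  rw [← h, aut_inv_apply]

theorem flatten_inj {N i j i' j' : ℕ} (hi : i < N) (hi' : i' < N)
    (h : i + N * j = i' + N * j') : i = i' ∧ j = j' := by
  have hj : j = j' := by
    rcases lt_trichotomy j j' with hlt | he | hlt
    · nlinarith
    · exact he
    · nlinarith
  subst hj
  exact ⟨Nat.add_right_cancel h, rfl⟩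

end McCoyAux

open SkewPoly in
/-- **Skew McCoy condition.** If `f` has all coefficients fixed by `ρ` and `θ` and
`f ⋆ g = 0` for some nonzero `g`, then `f ⋆ r = 0` for some nonzero constant `r`. -/
theorem SkewPoly.mccoy {R : Type*} [CommRing R] (ρ θ : RingAut R) [Fact (Commute ρ θ)]
    (f g : SkewPoly R ρ θ)
    (hf : ∀ p : ℕ × ℕ, ρ (coeff f p) = coeff f p ∧ θ (coeff f p) = coeff f p)
    (hg : g ≠ 0) (hfg : f * g = 0) :
    ∃ r : R, r ≠ 0 ∧ f * monomial ρ θ 0 0 r = 0 := by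
  classical
  have hc : Commute ρ θ := Fact.out
  set fF : (ℕ × ℕ) →₀ R := f with hfF
  set gF : (ℕ × ℕ) →₀ R := g with hgF
  have hfρ : ∀ p, ρ (fF p) = fF p := fun p => (hf p).1
  have hfθ : ∀ p, θ (fF p) = fF p := fun p => (hf p).2
  have hskm : SkewBivar.skmul ρ θ fF gF = 0 := hfg
  -- the untwisted companion of g
  set g' : (ℕ × ℕ) →₀ R := Finsupp.onFinset gF.support
      (fun q => (SkewBivar.σ ρ θ q)⁻¹ (gF q))
      (fun q hq => by
        rw [Finsupp.mem_support_iff]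
        intro h0
        exact hq (show (SkewBivar.σ ρ θ q)⁻¹ (gF q) = 0 by rw [h0, map_zero])) with hg'def
  have hg'app : ∀ q, g' q = (SkewBivar.σ ρ θ q)⁻¹ (gF q) := fun q => rfl
  have hg'ne : g' ≠ 0 := by
    obtain ⟨q, hq⟩ : ∃ q, gF q ≠ 0 := by
      by_contra h
      push_neg at h
      exact hg (Finsupp.ext h)
    intro h0
    apply hq
    have h1 : g' q = 0 := by rw [h0]; rfl
    rw [hg'app] at h1
    have h2 := congrArg (SkewBivar.σ ρ θ q) h1
    rwa [aut_apply_inv, map_zero] at h2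
  have hsupp : g'.support = gF.support := by
    ext b
    simp only [Finsupp.mem_support_iff, hg'app]
    constructor
    · intro h h0; exact h (by rw [h0, map_zero])
    · intro h h0
      apply h
      have h2 := congrArg (SkewBivar.σ ρ θ b) h0
      rwa [aut_apply_inv, map_zero] at h2
  -- the commutative (untwisted) product of f and g' vanishes
  set fA : AddMonoidAlgebra R (ℕ × ℕ) := AddMonoidAlgebra.ofCoeff fF with hfA
  set g'A : AddMonoidAlgebra R (ℕ × ℕ) := AddMonoidAlgebra.ofCoeff g' with hg'A
  have key : fA * g'A = 0 := by
    ext q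
    have hz : (SkewBivar.skmul ρ θ fF gF) q = 0 := by rw [hskm]; rfl
    have expand : (fA * g'A).coeff q
        = (SkewBivar.σ ρ θ q)⁻¹ ((SkewBivar.skmul ρ θ fF gF) q) := by
      rw [AddMonoidAlgebra.coeff_mul]
      show (fF.sum fun a r => g'.sum fun b s => if a + b = q then r * s else 0) = _
      unfold SkewBivar.skmul
      rw [Finsupp.sum_apply, Finsupp.sum, Finsupp.sum, map_sum]
      refine Finset.sum_congr rfl fun a ha => ?_
      rw [Finsupp.sum_apply, Finsupp.sum, Finsupp.sum, hsupp, map_sum]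
      refine Finset.sum_congr rfl fun b hb => ?_
      by_cases hab : a + b = q
      · rw [if_pos hab, hab, Finsupp.single_eq_same, map_mul, hg'app,
          sigma_inv_fixed ρ θ (fF a) (hfρ a) (hfθ a) q, ← hab,
          sigma_inv_comp ρ θ hc]
      · rw [if_neg hab, Finsupp.single_eq_of_ne' hab, map_zero]
    have h4 : (fA * g'A).coeff q = 0 := by
      rw [expand, hz, map_zero]
    rw [h4]; rfl
  -- flatten to a single variable
  set N : ℕ := (fF.support ∪ g'.support).sup (fun p => p.1) + 1 with hN
  have hbound : ∀ p ∈ fF.support ∪ g'.support, p.1 < N := by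
    intro p hp
    have h : p.1 ≤ (fF.support ∪ g'.support).sup (fun p => p.1) :=
      Finset.le_sup (f := fun p : ℕ × ℕ => p.1) hp
    omega
  set e : ℕ × ℕ →+ ℕ :=
      { toFun := fun p => p.1 + N * p.2
        map_zero' := rfl
        map_add' := fun p q => by
          simp only [Prod.fst_add, Prod.snd_add]
          ring } with he
  have heapp : ∀ p : ℕ × ℕ, e p = p.1 + N * p.2 := fun p => rfl
  have hinj : Set.InjOn e {p : ℕ × ℕ | p.1 < N} := by
    intro p hp q hq hpq
    simp only [Set.mem_setOf_eq] at hp hq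
    rw [heapp, heapp] at hpq
    obtain ⟨h1, h2⟩ := flatten_inj hp hq hpq
    exact Prod.ext h1 h2
  set Φ : AddMonoidAlgebra R (ℕ × ℕ) →+* AddMonoidAlgebra R ℕ :=
    AddMonoidAlgebra.mapDomainRingHom R e with hΦ
  have hΦapp : ∀ (h : AddMonoidAlgebra R (ℕ × ℕ)),
      (Φ h).coeff = Finsupp.mapDomain e h.coeff := fun h => by
    rw [hΦ]
    rfl
  have hFG : Φ fA * Φ g'A = 0 := by rw [← map_mul, key, map_zero]
  have hsubg : (g'.support : Set (ℕ × ℕ)) ⊆ {p : ℕ × ℕ | p.1 < N} := by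
    intro p hp
    exact hbound p (Finset.mem_union_right _ hp)
  have hsubf : (fF.support : Set (ℕ × ℕ)) ⊆ {p : ℕ × ℕ | p.1 < N} := by
    intro p hp
    exact hbound p (Finset.mem_union_left _ hp)
  have hGne : Φ g'A ≠ 0 := by
    obtain ⟨q, hq⟩ : ∃ q, g' q ≠ 0 := by
      by_contra h
      push_neg at h
      exact hg'ne (Finsupp.ext h)
    have hqmem : q ∈ (g'.support : Set (ℕ × ℕ)) := Finsupp.mem_support_iff.mpr hq
    have hmap : Finsupp.mapDomain e g' (e q) = g' q :=
      Finsupp.mapDomain_apply' _ g' hsubg hinj (hsubg hqmem)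
    intro h0
    have h0' : Finsupp.mapDomain e g' = 0 := by
      have := congrArg AddMonoidAlgebra.coeff h0
      rw [hΦapp] at this
      exact this
    rw [h0'] at hmap
    exact hq (by rw [← hmap]; rfl)
  set P : Polynomial R := (Polynomial.toFinsuppIso R).symm (Φ fA) with hP
  set Q : Polynomial R := (Polynomial.toFinsuppIso R).symm (Φ g'A) with hQ
  have hPQ : P * Q = 0 := by rw [hP, hQ, ← map_mul, hFG, map_zero]
  have hQne : Q ≠ 0 := by
    intro h0
    apply hGne
    have := congrArg (Polynomial.toFinsuppIso R) h0
    rwa [hQ, RingEquiv.apply_symm_apply, map_zero] at this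
  have hPnm : P ∉ nonZeroDivisors (Polynomial R) := by
    intro hmem
    exact hQne (hmem.2 Q (by rw [mul_comm]; exact hPQ))
  obtain ⟨r, hr, hrP⟩ := Polynomial.notMem_nonZeroDivisors_iff.mp hPnm
  have hann : ∀ p : ℕ × ℕ, fF p * r = 0 := by
    intro p
    by_cases hp : p ∈ fF.support
    · have hpmem : p ∈ (fF.support : Set (ℕ × ℕ)) := hp
      have hmap : Finsupp.mapDomain e fF (e p) = fF p :=
        Finsupp.mapDomain_apply' _ fF hsubf hinj (hsubf hpmem)
      have hco : P.coeff (e p) = fF p := by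
        rw [hP]
        show (Φ fA).coeff (e p) = fF p
        rw [hΦapp]
        exact hmap
      have h1 := congrArg (fun h => Polynomial.coeff h (e p)) hrP
      simp only [Polynomial.coeff_smul, smul_eq_mul, Polynomial.coeff_zero] at h1
      rw [hco] at h1
      rw [mul_comm]
      exact h1
    · rw [Finsupp.notMem_support_iff.mp hp, zero_mul]
  refine ⟨r, hr, ?_⟩
  show SkewBivar.skmul ρ θ fF (Finsupp.single ((0 : ℕ), (0 : ℕ)) r) = 0
  unfold SkewBivar.skmul
  apply Finset.sum_eq_zero
  intro a ha
  have hterm : (Finsupp.single ((0 : ℕ), (0 : ℕ)) r).sum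
      (fun b s => Finsupp.single (a + b) (fF a * SkewBivar.σ ρ θ a s)) = 0 := by
    rw [Finsupp.sum_single_index (by simp)]
    have hz : fF a * (SkewBivar.σ ρ θ a) r = 0 := by
      conv_lhs => rw [← sigma_fixed ρ θ (fF a) (hfρ a) (hfθ a) a]
      rw [← map_mul, hann a, map_zero]
    rw [hz, Finsupp.single_zero]
  exact hterm
end

section
/- If g(x,y) lies in the center of R[x,y;ρ,θ], then for every k, t ∈ ℕ the left ideal ⟨x^k y^t ⋆ g(x,y)⟩_l is a two-sided ideal of R[x,y;ρ,θ]. -/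
open Finsupp

namespace SkewPoly

open SkewBivar

variable {R : Type*} [CommRing R] {ρ θ : RingAut R}

theorem single_one_skmul (ρ θ : RingAut R) (k t : ℕ) (b : (ℕ × ℕ) →₀ R) :
    skmul ρ θ (Finsupp.single (k, t) 1) b
      = skmul ρ θ (Finsupp.mapRange (σ ρ θ (k, t)) (map_zero _) b)
          (Finsupp.single (k, t) 1) := by
  induction b using Finsupp.induction with
  | zero =>
    rw [skmul_zero, Finsupp.mapRange_zero, zero_skmul]
  | single_add p s b' _ _ ih =>
    rw [skmul_add, Finsupp.mapRange_add (map_add _), add_skmul, ih,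
      Finsupp.mapRange_single, single_skmul_single, single_skmul_single, map_one, mul_one,
      one_mul, add_comm p (k, t)]

theorem monomial_one_mul [Fact (Commute ρ θ)] (k t : ℕ) (b : SkewPoly R ρ θ) :
    monomial ρ θ k t 1 * b
      = (show SkewPoly R ρ θ from
          Finsupp.mapRange (σ ρ θ (k, t)) (map_zero _) b) * monomial ρ θ k t 1 := by
  rw [mul_def, mul_def]
  exact single_one_skmul ρ θ k t b

end SkewPoly

open SkewPoly in
/-- If `g` is central in `R[x,y;ρ,θ]`, then `⟨x^k y^t ⋆ g⟩_l` is a two-sided ideal. -/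
theorem SkewPoly.isTwoSidedIdeal_span_monomial_mul_central
    {R : Type*} [CommRing R] (ρ θ : RingAut R) [Fact (Commute ρ θ)]
    (g : SkewPoly R ρ θ) (hg : g ∈ Subring.center (SkewPoly R ρ θ)) (k t : ℕ) :
    IsTwoSidedIdeal (Ideal.span {monomial ρ θ k t 1 * g}) := by
  intro a ha b
  rw [Ideal.span, Submodule.mem_span_singleton] at ha
  obtain ⟨c, rfl⟩ := ha
  rw [Ideal.span, Submodule.mem_span_singleton]
  set m : SkewPoly R ρ θ := monomial ρ θ k t 1 with hm
  set w : SkewPoly R ρ θ :=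
    (show SkewPoly R ρ θ from Finsupp.mapRange (SkewBivar.σ ρ θ (k, t)) (map_zero _) b) with hw
  have hgb : g * b = b * g := (Subring.mem_center_iff.mp hg b).symm
  have hmb : m * b = w * m := monomial_one_mul k t b
  refine ⟨c * w, ?_⟩
  calc (c * w) • (m * g) = c * (w * m * g) := by
        rw [smul_eq_mul, mul_assoc, mul_assoc]
    _ = c * (m * b * g) := by rw [hmb]
    _ = c * (m * g) * b := by rw [mul_assoc m b g, ← hgb, ← mul_assoc m g b, ← mul_assoc]
    _ = c • (m * g) * b := by rw [smul_eq_mul]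
end

section
/- Let l, s be positive integers with ρ^l = id_R and θ^s = id_R, and let λ1, λ2 ∈ R^{ρ,θ}. Then the left ideal ⟨x^l − λ1, y^s − λ2⟩_l is a two-sided ideal of R[x,y;ρ,θ]. -/
open Finsupp

section Aux

variable {R : Type*} [CommRing R] (ρ θ : RingAut R)

theorem SkewPoly.sigma_fixed (i j : ℕ) {lam : R} (hρ : ρ lam = lam) (hθ : θ lam = lam) :
    SkewBivar.σ ρ θ (i, j) lam = lam := by
  have h2 : (θ ^ j) lam = lam := by
    induction j with
    | zero => rfl
    | succ n ih =>
      rw [pow_succ]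
      show (θ ^ n) (θ lam) = lam
      rw [hθ, ih]
  show (ρ ^ i) ((θ ^ j) lam) = lam
  rw [h2]
  induction i with
  | zero => rfl
  | succ n ih =>
    rw [pow_succ]
    show (ρ ^ n) (ρ lam) = lam
    rw [hρ, ih]

variable [Fact (Commute ρ θ)]

theorem SkewPoly.gen_comm (u v : ℕ) (hσ : SkewBivar.σ ρ θ (u, v) = 1)
    {lam : R} (hρ : ρ lam = lam) (hθ : θ lam = lam) (i j : ℕ) (c : R) :
    (monomial ρ θ u v 1 - monomial ρ θ 0 0 lam) * monomial ρ θ i j c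
      = monomial ρ θ i j c * (monomial ρ θ u v 1 - monomial ρ θ 0 0 lam) := by
  rw [sub_mul, mul_sub, monomial_mul_monomial, monomial_mul_monomial,
    monomial_mul_monomial, monomial_mul_monomial, hσ,
    sigma_fixed ρ θ i j hρ hθ]
  congr 1
  · rw [add_comm u i, add_comm v j, map_one, mul_one, one_mul]
    rfl
  · rw [zero_add, zero_add, add_zero, add_zero, mul_comm lam,
      show SkewBivar.σ ρ θ (0, 0) = 1 from SkewBivar.σ_zero ρ θ]
    rfl

theorem SkewPoly.gen_mul_mem (u v : ℕ) (hσ : SkewBivar.σ ρ θ (u, v) = 1)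
    {lam : R} (hρ : ρ lam = lam) (hθ : θ lam = lam)
    (I : Ideal (SkewPoly R ρ θ))
    (hgen : monomial ρ θ u v 1 - monomial ρ θ 0 0 lam ∈ I)
    (b : SkewPoly R ρ θ) :
    (monomial ρ θ u v 1 - monomial ρ θ 0 0 lam) * b ∈ I := by
  have key : ∀ b0 : (ℕ × ℕ) →₀ R,
      (monomial ρ θ u v 1 - monomial ρ θ 0 0 lam) * (show SkewPoly R ρ θ from b0) ∈ I := by
    intro b0
    induction b0 using Finsupp.induction with
    | zero =>
      show (monomial ρ θ u v 1 - monomial ρ θ 0 0 lam) * (0 : SkewPoly R ρ θ) ∈ I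
      rw [mul_zero]; exact I.zero_mem
    | single_add p c b' _ _ ih =>
      show (monomial ρ θ u v 1 - monomial ρ θ 0 0 lam) *
          (monomial ρ θ p.1 p.2 c + (show SkewPoly R ρ θ from b')) ∈ I
      rw [mul_add]
      refine I.add_mem ?_ ih
      rw [gen_comm ρ θ u v hσ hρ hθ]
      exact I.mul_mem_left _ hgen
  exact key b

end Aux

open SkewPoly in
/-- If `ρ^l = id`, `θ^s = id` and `λ₁, λ₂ ∈ R^{ρ,θ}`, then `⟨x^l − λ₁, y^s − λ₂⟩_l`
is a two-sided ideal of `R[x,y;ρ,θ]`. -/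
theorem SkewPoly.isTwoSidedIdeal_span_pair
    {R : Type*} [CommRing R] (ρ θ : RingAut R) [Fact (Commute ρ θ)]
    (l s : ℕ) (hl : 0 < l) (hs : 0 < s) (hρ : ρ ^ l = 1) (hθ : θ ^ s = 1)
    (lam₁ lam₂ : R) (h₁ρ : ρ lam₁ = lam₁) (h₁θ : θ lam₁ = lam₁)
    (h₂ρ : ρ lam₂ = lam₂) (h₂θ : θ lam₂ = lam₂) :
    IsTwoSidedIdeal (Ideal.span
      {monomial ρ θ l 0 1 - monomial ρ θ 0 0 lam₁,
       monomial ρ θ 0 s 1 - monomial ρ θ 0 0 lam₂}) := by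
  intro a ha b
  have hσ₁ : SkewBivar.σ ρ θ (l, 0) = 1 := by
    show ρ ^ l * θ ^ 0 = 1
    rw [hρ, pow_zero, one_mul]
  have hσ₂ : SkewBivar.σ ρ θ (0, s) = 1 := by
    show ρ ^ 0 * θ ^ s = 1
    rw [hθ, pow_zero, one_mul]
  set I := Ideal.span
      {monomial ρ θ l 0 1 - monomial ρ θ 0 0 lam₁,
       monomial ρ θ 0 s 1 - monomial ρ θ 0 0 lam₂} with hI
  have h1 : monomial ρ θ l 0 1 - monomial ρ θ 0 0 lam₁ ∈ I :=
    Ideal.subset_span (Set.mem_insert _ _)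
  have h2 : monomial ρ θ 0 s 1 - monomial ρ θ 0 0 lam₂ ∈ I :=
    Ideal.subset_span (Set.mem_insert_of_mem _ rfl)
  induction ha using Submodule.span_induction with
  | mem x hx =>
    rcases hx with h | h
    · rw [h]; exact gen_mul_mem ρ θ l 0 hσ₁ h₁ρ h₁θ I h1 b
    · rw [h]; exact gen_mul_mem ρ θ 0 s hσ₂ h₂ρ h₂θ I h2 b
  | zero => rw [zero_mul]; exact I.zero_mem
  | add x y _ _ hx hy => rw [add_mul]; exact I.add_mem hx hy
  | smul r x _ hx =>
    rw [smul_eq_mul, mul_assoc]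
    exact I.mul_mem_left _ hx
end

section
/- Let λ be a unit in R with θ(λ) = λ and let l be a positive integer. Then ρ^l = id_R and ρ(λ) = λ if and only if x^l − λ lies in the center of R[x,y;ρ,θ]. Dually, if λ is a unit with ρ(λ) = λ and s is a positive integer, then θ^s = id_R and θ(λ) = λ if and only if y^s − λ lies in the center of R[x,y;ρ,θ]. -/
open Finsupp

namespace SkewPoly

open SkewBivar

section Aux
variable {R : Type*} [CommRing R] {ρ θ : RingAut R}

theorem fix_pow {φ : RingAut R} {c : R} (h : φ c = c) : ∀ n : ℕ, (φ ^ n) c = c := by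
  intro n
  induction n with
  | zero => rfl
  | succ n ih =>
    rw [pow_succ]
    show (φ ^ n) (φ c) = c
    rw [h, ih]

theorem σ_apply (q : ℕ × ℕ) (c : R) : σ ρ θ q c = (ρ ^ q.1) ((θ ^ q.2) c) := rfl

theorem coeff_sub [Fact (Commute ρ θ)] (f g : SkewPoly R ρ θ) (q : ℕ × ℕ) :
    coeff (f - g) q = coeff f q - coeff g q := rfl

theorem coeff_monomial (i j : ℕ) (a : R) (q : ℕ × ℕ) :
    coeff (monomial ρ θ i j a) q = if ((i, j) : ℕ × ℕ) = q then a else 0 :=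
  Finsupp.single_apply

theorem key (ρ θ : RingAut R) [Fact (Commute ρ θ)] (lam : R) (p : ℕ × ℕ) (hp : p ≠ 0) :
    monomial ρ θ p.1 p.2 1 - monomial ρ θ 0 0 lam ∈ Subring.center (SkewPoly R ρ θ) ↔
      (σ ρ θ p = 1 ∧ ∀ q : ℕ × ℕ, σ ρ θ q lam = lam) := by
  rw [Subring.mem_center_iff]
  constructor
  · intro h
    constructor
    · ext r
      have e := h (monomial ρ θ 0 0 r)
      rw [mul_sub, sub_mul, monomial_mul_monomial, monomial_mul_monomial,
        monomial_mul_monomial, monomial_mul_monomial] at e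
      have e2 := congrArg (fun f => coeff f p) e
      simp only [coeff_sub, coeff_monomial, Nat.zero_add, Nat.add_zero, Prod.mk.eta,
        Prod.mk_zero_zero, Ne.symm hp, if_true, if_false, eq_self_iff_true, ite_false,
        σ_zero, sub_zero, mul_one, one_mul] at e2
      simpa using e2.symm
    · intro q
      have e := h (monomial ρ θ q.1 q.2 1)
      rw [mul_sub, sub_mul, monomial_mul_monomial, monomial_mul_monomial,
        monomial_mul_monomial, monomial_mul_monomial] at e
      have hne : ((q.1 + p.1, q.2 + p.2) : ℕ × ℕ) ≠ q := by
        intro h'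
        apply hp
        have h1 := congrArg Prod.fst h'
        have h2 := congrArg Prod.snd h'
        simp only at h1 h2
        have hpp : p = (p.1, p.2) := rfl
        rw [hpp, Prod.mk_eq_zero]
        omega
      have hne' : ((p.1 + q.1, p.2 + q.2) : ℕ × ℕ) ≠ q := by
        rw [Nat.add_comm p.1, Nat.add_comm p.2]; exact hne
      have e2 := congrArg (fun f => coeff f q) e
      simp only [coeff_sub, coeff_monomial, Nat.zero_add, Nat.add_zero, Prod.mk.eta,
        hne, hne', if_true, if_false, eq_self_iff_true, ite_false,
        σ_zero, zero_sub, one_mul, mul_one, neg_inj] at e2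
      simpa using e2
  · rintro ⟨h1, h2⟩ g
    induction g using Finsupp.induction with
    | zero =>
      exact (zero_mul _).trans (mul_zero _).symm
    | single_add q r g' _ _ ih =>
      refine (add_mul (R := SkewPoly R ρ θ) (Finsupp.single q r) g' _).trans
        ((congrArg₂ (HAdd.hAdd : SkewPoly R ρ θ → SkewPoly R ρ θ → SkewPoly R ρ θ) ?_ ih).trans
          (mul_add (R := SkewPoly R ρ θ) _ (Finsupp.single q r) g').symm)
      have hq : (Finsupp.single q r : SkewPoly R ρ θ) = monomial ρ θ q.1 q.2 r := rfl
      rw [hq, mul_sub, sub_mul, monomial_mul_monomial, monomial_mul_monomial,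
        monomial_mul_monomial, monomial_mul_monomial]
      congr 1
      · rw [Nat.add_comm p.1, Nat.add_comm p.2]
        congr 1
        rw [map_one, mul_one, h1]
        show r = 1 * r
        rw [one_mul]
      · simp only [Nat.add_zero, Nat.zero_add, σ_zero]
        congr 1
        rw [h2 q, mul_comm r lam]
        show lam * r = lam * r
        rfl

end Aux

end SkewPoly

open SkewPoly in
/-- For a unit `λ`: if `θ(λ) = λ`, then (`ρ^l = id` and `ρ(λ) = λ`) iff `x^l − λ` is
central; dually, if `ρ(λ) = λ`, then (`θ^s = id` and `θ(λ) = λ`) iff `y^s − λ` is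
central in `R[x,y;ρ,θ]`. -/
theorem SkewPoly.sub_mem_center_iff
    {R : Type*} [CommRing R] (ρ θ : RingAut R) [Fact (Commute ρ θ)]
    (lam : Rˣ) (l s : ℕ) (hl : 0 < l) (hs : 0 < s) :
    (θ (lam : R) = (lam : R) →
      ((ρ ^ l = 1 ∧ ρ (lam : R) = (lam : R)) ↔
        monomial ρ θ l 0 1 - monomial ρ θ 0 0 (lam : R) ∈
          Subring.center (SkewPoly R ρ θ))) ∧
    (ρ (lam : R) = (lam : R) →
      ((θ ^ s = 1 ∧ θ (lam : R) = (lam : R)) ↔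
        monomial ρ θ 0 s 1 - monomial ρ θ 0 0 (lam : R) ∈
          Subring.center (SkewPoly R ρ θ))) := by
  constructor
  · intro hθ
    rw [show SkewPoly.monomial ρ θ l 0 1
        = SkewPoly.monomial ρ θ ((l,0) : ℕ × ℕ).1 ((l,0) : ℕ × ℕ).2 1 from rfl,
      SkewPoly.key ρ θ (lam : R) (l, 0) (fun h => hl.ne' (congrArg Prod.fst h))]
    constructor
    · rintro ⟨h1, h2⟩
      refine ⟨?_, fun q => ?_⟩
      · ext r
        rw [SkewBivar.σ]
        simp [h1, DFunLike.congr_fun h1 r]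
      · rw [SkewPoly.σ_apply, SkewPoly.fix_pow hθ, SkewPoly.fix_pow h2]
    · rintro ⟨h1, h2⟩
      refine ⟨?_, ?_⟩
      · ext r
        have e := DFunLike.congr_fun h1 r
        rw [SkewBivar.σ] at e
        simpa using e
      · have e := h2 (1, 0)
        rw [SkewPoly.σ_apply] at e
        simpa using e
  · intro hρ
    rw [show SkewPoly.monomial ρ θ 0 s 1
        = SkewPoly.monomial ρ θ ((0,s) : ℕ × ℕ).1 ((0,s) : ℕ × ℕ).2 1 from rfl,
      SkewPoly.key ρ θ (lam : R) (0, s) (fun h => hs.ne' (congrArg Prod.snd h))]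
    constructor
    · rintro ⟨h1, h2⟩
      refine ⟨?_, fun q => ?_⟩
      · ext r
        rw [SkewBivar.σ]
        simp [DFunLike.congr_fun h1 r]
      · rw [SkewPoly.σ_apply, SkewPoly.fix_pow h2, SkewPoly.fix_pow hρ]
    · rintro ⟨h1, h2⟩
      refine ⟨?_, ?_⟩
      · ext r
        have e := DFunLike.congr_fun h1 r
        rw [SkewBivar.σ] at e
        simpa using e
      · have e := h2 (0, 1)
        rw [SkewPoly.σ_apply] at e
        simpa using e
end
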